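/- Mean-square smallness of S^{-1} − I: for every T > 0 there exists a constant K ≥ 0 such that for all t ∈ [0, T] and all v ∈ ℝ^d, ∫_{ℝ^m} ‖(S(−t; −w) − I_d)·v‖² dγ_t^{⊗m}(w) ≤ K·t·‖v‖², where γ_t^{⊗m} is the m-fold product of the Gaussian measure N(0, t) on ℝ. (Under the commutator conditions S(−t; −w) = S(t; w)^{-1}; this is the estimate E‖(S_{s,t_k}^{-1} − I)v‖² ≤ K|s − t_k|·‖v‖² used for the terms II and IV in the proofs of Lemmas 1 and 2.) -/

import Mathlib

/-!
`S(-t; -w) = exp X` with `X = -t C - ∑ wᵢ Bᵢ`, `C = A - ½ ∑ Bᵢ²`, and term by term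
`‖exp X - 1‖ ≤ ‖X‖ e^‖X‖`. Substituting `w = √t z` with `z` standard Gaussian gives
`‖X‖ ≤ √t c y` for `c = ‖C‖ + ∑ ‖Bᵢ‖` and `y = √T + ∑ |zᵢ|`, hence
`‖exp X - 1‖² ≤ t c² y² e^{2c√T y} ≤ 2 t c² e^{(2c√T + 1) y}`, and the last factor has a finite
Gaussian mean that does not depend on `t`.
-/

open scoped Matrix
open MeasureTheory ProbabilityTheory

/-- `S τ w = exp((A − (1/2)·∑ᵢ Bᵢ²)·τ + ∑ᵢ wᵢ·Bᵢ)`. -/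
noncomputable def S {d m : ℕ} (A : Matrix (Fin d) (Fin d) ℝ)
    (B : Fin m → Matrix (Fin d) (Fin d) ℝ) (τ : ℝ) (w : Fin m → ℝ) :
    Matrix (Fin d) (Fin d) ℝ :=
  NormedSpace.exp (τ • (A - (1 / 2 : ℝ) • ∑ i, B i ^ 2) + ∑ i, w i • B i)

-- Matrices carry the operator norm for the Euclidean norm on `ℝᵈ`, so `‖M v‖ ≤ ‖M‖ ‖v‖`.
open scoped Nat Matrix.Norms.L2Operator

theorem NormedSpace.norm_exp_sub_one_le {𝔸 : Type*} [NormedRing 𝔸] [NormedAlgebra ℝ 𝔸]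
    [CompleteSpace 𝔸] (x : 𝔸) : ‖exp x - 1‖ ≤ ‖x‖ * Real.exp ‖x‖ := by
  have hterm (n : ℕ) : ‖((n + 1)! : ℝ)⁻¹ • x ^ (n + 1)‖ ≤ ‖x‖ * (‖x‖ ^ n / n !) := by
    rw [norm_smul, norm_inv, Real.norm_natCast]
    calc ((n + 1)! : ℝ)⁻¹ * ‖x ^ (n + 1)‖ ≤ (n ! : ℝ)⁻¹ * ‖x‖ ^ (n + 1) := by
          gcongr
          · exact n.le_succ
          · exact norm_pow_le' x n.succ_pos
      _ = ‖x‖ * (‖x‖ ^ n / n !) := by ring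
  rw [congrFun (exp_eq_tsum ℝ) x, (expSeries_summable' (𝕂 := ℝ) x).tsum_eq_zero_add]
  simp only [pow_zero, Nat.factorial_zero, Nat.cast_one, inv_one, one_smul, add_sub_cancel_left]
  calc _ ≤ ∑' n : ℕ, ‖x‖ * (‖x‖ ^ n / n !) :=
        tsum_of_norm_bounded ((Real.summable_pow_div_factorial ‖x‖).mul_left _).hasSum hterm
    _ = ‖x‖ * Real.exp ‖x‖ := by
        rw [tsum_mul_left, Real.exp_eq_exp_ℝ, exp_eq_tsum_div]

theorem Real.sq_le_two_mul_exp {y : ℝ} (hy : 0 ≤ y) : y ^ 2 ≤ 2 * Real.exp y := by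
  have h := Real.pow_div_factorial_le_exp y hy 2
  norm_num at h
  linarith

theorem Real.sq_mul_exp_le {r s s₀ y : ℝ} (hr : 0 ≤ r) (hrs : r ≤ s * y) (hs₀ : s ≤ s₀)
    (hy : 0 ≤ y) : (r * Real.exp r) ^ 2 ≤ 2 * s ^ 2 * Real.exp ((2 * s₀ + 1) * y) := by
  have hr_sq : r ^ 2 ≤ s ^ 2 * y ^ 2 := mul_pow s y 2 ▸ pow_le_pow_left₀ hr hrs 2
  have hexp : Real.exp r ≤ Real.exp (s₀ * y) :=
    Real.exp_le_exp.2 (hrs.trans (mul_le_mul_of_nonneg_right hs₀ hy))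
  calc (r * Real.exp r) ^ 2 = r ^ 2 * Real.exp r ^ 2 := mul_pow _ _ _
    _ ≤ s ^ 2 * y ^ 2 * Real.exp (s₀ * y) ^ 2 := by gcongr
    _ ≤ s ^ 2 * (2 * Real.exp y) * Real.exp (s₀ * y) ^ 2 := by
        gcongr; exact Real.sq_le_two_mul_exp hy
    _ = 2 * s ^ 2 * Real.exp ((2 * s₀ + 1) * y) := by
        rw [show (2 * s₀ + 1) * y = y + s₀ * y + s₀ * y by ring, Real.exp_add, Real.exp_add]
        ring

theorem integrable_exp_mul_abs_gaussianReal (b μ : ℝ) (v : NNReal) :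
    Integrable (fun x => Real.exp (b * |x|)) (gaussianReal μ v) :=
  integrable_exp_mul_abs (integrable_exp_mul_gaussianReal _) (integrable_exp_mul_gaussianReal _)

theorem integrable_exp_mul_sum_abs_pi_gaussianReal {ι : Type*} [Fintype ι] (b μ : ℝ)
    (v : NNReal) :
    Integrable (fun z : ι → ℝ => Real.exp (b * ∑ i, |z i|))
      (Measure.pi fun _ => gaussianReal μ v) := by
  simp_rw [Finset.mul_sum, Real.exp_sum]
  exact Integrable.fintype_prod fun _ => integrable_exp_mul_abs_gaussianReal b μ v

theorem measurePreserving_sqrt_mul_gaussianReal {t : ℝ} (ht : 0 ≤ t) :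
    MeasurePreserving (fun x => √t * x) (gaussianReal 0 1) (gaussianReal 0 t.toNNReal) := by
  refine ⟨measurable_const_mul _, ?_⟩
  rw [gaussianReal_map_const_mul, mul_zero, mul_one]
  congr
  simp [Real.sq_sqrt ht, ht]

@[fun_prop]
theorem Matrix.continuous_toEuclideanCLM {𝕜 n : Type*} [RCLike 𝕜] [Fintype n] [DecidableEq n] :
    Continuous (toEuclideanCLM (𝕜 := 𝕜) (n := n)) :=
  AddMonoidHomClass.continuous_of_bound _ 1 fun M => by
    rw [one_mul, Matrix.l2_opNorm_toEuclideanCLM]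

@[fun_prop]
theorem continuous_S {d m : ℕ} (A : Matrix (Fin d) (Fin d) ℝ)
    (B : Fin m → Matrix (Fin d) (Fin d) ℝ) (τ : ℝ) : Continuous (S A B τ) := by
  have hexp : Continuous (NormedSpace.exp : Matrix (Fin d) (Fin d) ℝ → _) :=
    continuous_iff_continuousAt.2 fun M => (NormedSpace.exp_analytic (𝕂 := ℝ) M).continuousAt
  unfold S
  fun_prop

theorem norm_neg_smul_add_sum_neg_sqrt_smul_le {E ι : Type*} [SeminormedAddCommGroup E]
    [NormedSpace ℝ E] [Fintype ι] (C : E) (B : ι → E) {t T : ℝ} (ht : 0 ≤ t) (htT : t ≤ T)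
    (z : ι → ℝ) :
    ‖(-t) • C + ∑ i, (-(√t * z i)) • B i‖ ≤
      √t * ((‖C‖ + ∑ i, ‖B i‖) * (√T + ∑ i, |z i|)) := by
  have hC : ‖(-t) • C‖ ≤ √t * (√T * ‖C‖) := by
    rw [norm_smul, Real.norm_eq_abs, abs_neg, abs_of_nonneg ht, ← mul_assoc]
    gcongr
    calc t = √t * √t := (Real.mul_self_sqrt ht).symm
      _ ≤ √t * √T := by gcongr
  have hB : ‖∑ i, (-(√t * z i)) • B i‖ ≤ √t * ((∑ i, ‖B i‖) * ∑ i, |z i|) := by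
    rw [Finset.sum_mul, Finset.mul_sum]
    refine (norm_sum_le _ _).trans (Finset.sum_le_sum fun i _ => ?_)
    rw [norm_smul, Real.norm_eq_abs, abs_neg, abs_mul, abs_of_nonneg (Real.sqrt_nonneg t),
      mul_assoc, mul_comm |z i|]
    gcongr
    exact Finset.single_le_sum (fun j _ => abs_nonneg (z j)) (Finset.mem_univ i)
  have hCz : 0 ≤ ‖C‖ * ∑ i, |z i| := by positivity
  have hBT : 0 ≤ (∑ i, ‖B i‖) * √T := by positivity
  calc _ ≤ √t * (√T * ‖C‖) + √t * ((∑ i, ‖B i‖) * ∑ i, |z i|) := norm_add_le_of_le hC hB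
    _ ≤ _ := by nlinarith [Real.sqrt_nonneg t]

theorem sq_norm_exp_neg_smul_add_sum_neg_sqrt_smul_sub_one_le {𝔸 ι : Type*} [NormedRing 𝔸]
    [NormedAlgebra ℝ 𝔸] [CompleteSpace 𝔸] [Fintype ι] (C : 𝔸) (B : ι → 𝔸) {t T : ℝ}
    (ht : 0 ≤ t) (htT : t ≤ T) (z : ι → ℝ) :
    ‖NormedSpace.exp ((-t) • C + ∑ i, (-(√t * z i)) • B i) - 1‖ ^ 2 ≤
      2 * t * (‖C‖ + ∑ i, ‖B i‖) ^ 2 *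
        Real.exp ((2 * (‖C‖ + ∑ i, ‖B i‖) * √T + 1) * (√T + ∑ i, |z i|)) := by
  set c := ‖C‖ + ∑ i, ‖B i‖
  set X := (-t) • C + ∑ i, (-(√t * z i)) • B i
  calc ‖NormedSpace.exp X - 1‖ ^ 2 ≤ (‖X‖ * Real.exp ‖X‖) ^ 2 := by
        gcongr; exact NormedSpace.norm_exp_sub_one_le X
    _ ≤ 2 * (√t * c) ^ 2 * Real.exp ((2 * (c * √T) + 1) * (√T + ∑ i, |z i|)) :=
        Real.sq_mul_exp_le (norm_nonneg X)
          (by simpa only [mul_assoc] using norm_neg_smul_add_sum_neg_sqrt_smul_le C B ht htT z)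
          (by rw [mul_comm]; gcongr) (by positivity)
    _ = _ := by rw [mul_pow, Real.sq_sqrt ht]; ring_nf

theorem S_inv_sub_id_mean_square_small_general {d m : ℕ}
    (A : Matrix (Fin d) (Fin d) ℝ) (B : Fin m → Matrix (Fin d) (Fin d) ℝ) :
    ∀ T : ℝ, 0 < T → ∃ K : ℝ, 0 ≤ K ∧ ∀ t ∈ Set.Icc (0 : ℝ) T,
      ∀ v : EuclideanSpace ℝ (Fin d),
        ∫ w : Fin m → ℝ,
            ‖Matrix.toEuclideanCLM (𝕜 := ℝ) (S A B (-t) (-w) - 1) v‖ ^ 2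
            ∂(Measure.pi fun _ : Fin m => gaussianReal 0 t.toNNReal) ≤
          K * t * ‖v‖ ^ 2 := by
  intro T _
  set c := ‖A - (1 / 2 : ℝ) • ∑ i, B i ^ 2‖ + ∑ i, ‖B i‖
  set b := 2 * c * √T + 1
  set γ : Measure (Fin m → ℝ) := Measure.pi fun _ => gaussianReal 0 1
  refine ⟨2 * c ^ 2 * Real.exp (b * √T) * ∫ z, Real.exp (b * ∑ i, |z i|) ∂γ, by positivity, ?_⟩
  rintro t ⟨ht, htT⟩ v
  have hscale := measurePreserving_pi (fun _ : Fin m => gaussianReal 0 1) _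
    fun _ => measurePreserving_sqrt_mul_gaussianReal ht
  have hcont : Continuous fun w : Fin m → ℝ =>
      ‖Matrix.toEuclideanCLM (𝕜 := ℝ) (S A B (-t) (-w) - 1) v‖ ^ 2 := by
    fun_prop
  rw [← hscale.map_eq, integral_map hscale.measurable.aemeasurable hcont.aestronglyMeasurable]
  have hbound (z : Fin m → ℝ) :
      ‖Matrix.toEuclideanCLM (𝕜 := ℝ) (S A B (-t) (-fun i => √t * z i) - 1) v‖ ^ 2 ≤
        2 * c ^ 2 * Real.exp (b * √T) * t * ‖v‖ ^ 2 * Real.exp (b * ∑ i, |z i|) :=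
    calc _ ≤ (‖S A B (-t) (-fun i => √t * z i) - 1‖ * ‖v‖) ^ 2 := by
          gcongr; exact ContinuousLinearMap.le_opNorm _ _
      _ ≤ 2 * t * c ^ 2 * Real.exp (b * (√T + ∑ i, |z i|)) * ‖v‖ ^ 2 := by
          rw [mul_pow]
          gcongr
          exact sq_norm_exp_neg_smul_add_sum_neg_sqrt_smul_sub_one_le _ B ht htT z
      _ = _ := by rw [mul_add, Real.exp_add]; ring
  calc _ ≤ ∫ z, 2 * c ^ 2 * Real.exp (b * √T) * t * ‖v‖ ^ 2 * Real.exp (b * ∑ i, |z i|) ∂γ :=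
        integral_mono_of_nonneg (ae_of_all _ fun _ => by positivity)
          ((integrable_exp_mul_sum_abs_pi_gaussianReal b 0 1).const_mul _) (ae_of_all _ hbound)
    _ = _ := by rw [integral_const_mul]; ring

/-- Mean-square smallness of `S⁻¹ − I`: for every `T > 0` there is a constant `K ≥ 0`
such that for all `t ∈ [0, T]` and all `v ∈ ℝᵈ` (Euclidean norm),
`∫ ‖(S(−t; −w) − I)·v‖² dγ_t^{⊗m}(w) ≤ K·t·‖v‖²`, where `γ_t^{⊗m}` is the `m`-fold
product of the Gaussian measure `N(0, t)` on `ℝ`. -/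
theorem S_inv_sub_id_mean_square_small {d m : ℕ} (hd : 0 < d) (hm : 0 < m)
    (A : Matrix (Fin d) (Fin d) ℝ) (B : Fin m → Matrix (Fin d) (Fin d) ℝ) :
    ∀ T : ℝ, 0 < T → ∃ K : ℝ, 0 ≤ K ∧ ∀ t ∈ Set.Icc (0 : ℝ) T,
      ∀ v : EuclideanSpace ℝ (Fin d),
        ∫ w : Fin m → ℝ,
            ‖Matrix.toEuclideanCLM (𝕜 := ℝ) (S A B (-t) (-w) - 1) v‖ ^ 2
            ∂(Measure.pi fun _ : Fin m => gaussianReal 0 t.toNNReal) ≤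
          K * t * ‖v‖ ^ 2 :=
  S_inv_sub_id_mean_square_small_general A B
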